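/- Let Z be an n-dimensional naturally graded p-filiform complex Zinbiel algebra of first type, in an adapted basis {e_1,…,e_{n−p},f_1,…,f_p} normalized so that f_{s_1+⋯+s_{t−1}+i} ∘ e_1 = f_{s_1+⋯+s_t+i} for 1 ≤ i ≤ s_{t+1} and f_{s_1+⋯+s_{t−1}+i} ∘ e_1 = 0 for s_{t+1}+1 ≤ i ≤ s_t (1 ≤ t ≤ n−p−1). Then for all k ≥ 0 and all 1 ≤ j ≤ n−p−k: f_{s_1+⋯+s_k+i} ∘ e_j = (1/j!) f_{s_1+⋯+s_{k+j}+i} for 1 ≤ i ≤ s_{k+j+1}, and f_{s_1+⋯+s_k+i} ∘ e_j = 0 for s_{k+j+1}+1 ≤ i ≤ s_{k+j}. -/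

import Mathlib

/-!
By the Zinbiel identity, `e_{j+1} = e_1 ∘ e_j` gives `e_j ∘ e_1 = j e_{j+1}` and then
`(x ∘ e_1) ∘ e_j = (j + 1) x ∘ e_{j+1}` for every `x`. So right multiplication by `e_{j+1}` is,
up to the factor `1/(j+1)`, right multiplication by `e_1` followed by `e_j`, and induction on `j`
reduces all products `f ∘ e_j` to the normalized products `f ∘ e_1`.

The induction needs `s_1 ≥ s_2 ≥ ⋯`. If `s_{t+1} > s_t`, the normalization would send
`f_{s_1+⋯+s_t+1} ∈ Z_{t+1}` to the nonzero basis vector `f_{s_1+⋯+s_t+s_t+1}` of `Z_{t+1}`,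
although the product lies in `Z_{t+2}`.
-/

open Module Submodule

/-- The Zinbiel identity for a bilinear operation `mul` on a complex vector space:
`(x∘y)∘z = x∘(y∘z) + x∘(z∘y)`. -/
def IsZinbiel {Z : Type*} [AddCommGroup Z] [Module ℂ Z] (mul : Z →ₗ[ℂ] Z →ₗ[ℂ] Z) : Prop :=
  ∀ x y z : Z, mul (mul x y) z = mul x (mul y z) + mul x (mul z y)
/-- The square `Z ∘ Z` of the algebra. -/
def algSq {Z : Type*} [AddCommGroup Z] [Module ℂ Z] (mul : Z →ₗ[ℂ] Z →ₗ[ℂ] Z) :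
    Submodule ℂ Z :=
  Submodule.span ℂ {z | ∃ x y, z = mul x y}
/-- `C(Z) = (n-p, 1, …, 1)` (`p`-filiformity) expressed via the left multiplication
operators: for every `x ∉ Z²` the nilpotent operator `L_x` satisfies `L_x^(n-p) = 0`
and has rank at most `n-p-1`; this says exactly that the Jordan type of every `L_x`
is lexicographically at most `(n-p, 1, …, 1)`. -/
def CharSeqMax {Z : Type*} [AddCommGroup Z] [Module ℂ Z]
    (mul : Z →ₗ[ℂ] Z →ₗ[ℂ] Z) (n p : ℕ) : Prop :=
  ∀ x : Z, x ∉ algSq mul →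
    ((mul x : Module.End ℂ Z) ^ (n - p) = 0) ∧
      Module.finrank ℂ (LinearMap.range (mul x)) ≤ n - p - 1
/-- The adapted family `e_1, …, e_m, f_1, …, f_p` indexed by `Fin m ⊕ Fin p`. -/
def adaptedFam {Z : Type*} (m p : ℕ) (e f : ℕ → Z) : Fin m ⊕ Fin p → Z :=
  Sum.elim (fun i => e ((i : ℕ) + 1)) (fun j => f ((j : ℕ) + 1))
/-- `psum s k = s 1 + s 2 + ⋯ + s k`. -/
def psum (s : ℕ → ℕ) (k : ℕ) : ℕ := ∑ j ∈ Finset.Icc 1 k, s j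

lemma psum_succ (s : ℕ → ℕ) (t : ℕ) : psum s (t + 1) = psum s t + s (t + 1) := by
  rw [psum, psum, Finset.sum_Icc_succ_top (by omega)]

lemma psum_mono (s : ℕ → ℕ) : Monotone (psum s) := fun _ _ h =>
  Finset.sum_le_sum_of_subset (Finset.Icc_subset_Icc_right h)

lemma adaptedFam_right_ne_zero {Z : Type*} [AddCommGroup Z] [Module ℂ Z] {m p : ℕ}
    {e f : ℕ → Z} (hli : LinearIndependent ℂ (adaptedFam m p e f)) {q : ℕ} (hq1 : 1 ≤ q)
    (hqp : q ≤ p) : f q ≠ 0 := by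
  simpa [adaptedFam, Nat.sub_add_cancel hq1] using hli.ne_zero (Sum.inr ⟨q - 1, by omega⟩)

lemma DirectSum.IsInternal.eq_zero_of_mem_of_mem {Z : Type*} [AddCommGroup Z] [Module ℂ Z]
    {W : ℕ → Submodule ℂ Z} (hW : DirectSum.IsInternal W) {a b : ℕ} (hab : a ≠ b) {x : Z}
    (ha : x ∈ W a) (hb : x ∈ W b) : x = 0 :=
  Submodule.disjoint_def.mp (hW.submodule_iSupIndep.pairwiseDisjoint hab) x ha hb

namespace IsZinbiel

variable {Z : Type*} [AddCommGroup Z] [Module ℂ Z] {mul : Z →ₗ[ℂ] Z →ₗ[ℂ] Z}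
  {e : ℕ → Z} {m : ℕ}

lemma chain_mul_e_one (hzin : IsZinbiel mul)
    (hee : ∀ i, 1 ≤ i → i < m → mul (e 1) (e i) = e (i + 1)) :
    ∀ j, 1 ≤ j → j < m → mul (e j) (e 1) = (j : ℂ) • e (j + 1) := by
  intro j hj
  induction j, hj using Nat.le_induction with
  | base => intro hm; simpa using hee 1 le_rfl hm
  | succ j hj ih =>
    intro hjm
    rw [← hee j hj (by omega), hzin, ih (by omega), map_smul, hee j hj (by omega),
      hee (j + 1) (by omega) hjm]
    push_cast
    rw [add_smul, one_smul]

lemma mul_chain_succ (hzin : IsZinbiel mul)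
    (hee : ∀ i, 1 ≤ i → i < m → mul (e 1) (e i) = e (i + 1)) {j : ℕ} (hj : 1 ≤ j)
    (hjm : j < m) (x : Z) :
    mul x (e (j + 1)) = ((j + 1 : ℕ) : ℂ)⁻¹ • mul (mul x (e 1)) (e j) := by
  have hne : ((j + 1 : ℕ) : ℂ) ≠ 0 := Nat.cast_ne_zero.mpr j.succ_ne_zero
  rw [eq_inv_smul_iff₀ hne, hzin, hee j hj hjm, hzin.chain_mul_e_one hee j hj hjm, map_smul]
  push_cast
  rw [add_smul, one_smul, add_comm]

lemma mul_chain_of_mul_e_one (hzin : IsZinbiel mul)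
    (hee : ∀ i, 1 ≤ i → i < m → mul (e 1) (e i) = e (i + 1))
    {g : ℕ → ℕ → Z} {s : ℕ → ℕ} (hs : AntitoneOn s (Set.Ici 1))
    (hg : ∀ k, k < m →
      (∀ i, 1 ≤ i → i ≤ s (k + 2) → mul (g k i) (e 1) = g (k + 1) i) ∧
      (∀ i, s (k + 2) + 1 ≤ i → i ≤ s (k + 1) → mul (g k i) (e 1) = 0)) :
    ∀ j k, 1 ≤ j → j + k ≤ m →
      (∀ i, 1 ≤ i → i ≤ s (k + j + 1) →
        mul (g k i) (e j) = ((j.factorial : ℂ))⁻¹ • g (k + j) i) ∧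
      (∀ i, s (k + j + 1) + 1 ≤ i → i ≤ s (k + j) → mul (g k i) (e j) = 0) := by
  have hs' : ∀ {a b}, 1 ≤ a → a ≤ b → s b ≤ s a := fun ha hab =>
    hs (Set.mem_Ici.2 ha) (Set.mem_Ici.2 (ha.trans hab)) hab
  intro j k hj
  induction j, hj using Nat.le_induction generalizing k with
  | base => intro hk; simpa [add_comm 1 k] using hg k (by omega)
  | succ j hj ih =>
    intro hjk
    obtain ⟨ih₁, ih₀⟩ := ih (k + 1) (by omega)
    obtain ⟨hg₁, hg₀⟩ := hg k (by omega)
    have hfac : (((j + 1).factorial : ℕ) : ℂ)⁻¹ = ((j + 1 : ℕ) : ℂ)⁻¹ * (j.factorial : ℂ)⁻¹ := by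
      rw [Nat.factorial_succ, Nat.cast_mul, mul_inv]
    simp only [mul_chain_succ hzin hee hj (by omega), show k + (j + 1) = k + 1 + j by omega]
    refine ⟨fun i hi1 hi => ?_, fun i hi1 hi => ?_⟩
    · rw [hg₁ i hi1 (hi.trans (hs' (by omega) (by omega))), ih₁ i hi1 hi, smul_smul, hfac]
    · rcases le_or_gt i (s (k + 2)) with hik | hik
      · rw [hg₁ i (by omega) hik, ih₀ i hi1 hi, smul_zero]
      · rw [hg₀ i hik (hi.trans (hs' (by omega) (by omega))), map_zero, LinearMap.zero_apply,
          smul_zero]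

end IsZinbiel

section Graded

variable {Z : Type*} [AddCommGroup Z] [Module ℂ Z] {mul : Z →ₗ[ℂ] Z →ₗ[ℂ] Z}
  {W : ℕ → Submodule ℂ Z} {e f : ℕ → Z} {s : ℕ → ℕ}

lemma f_mem_of_eq_span {t : ℕ}
    (hW : W (t + 1) = span ℂ (insert (e (t + 1)) (f '' Set.Icc (psum s t + 1) (psum s (t + 1)))))
    {i : ℕ} (hi1 : 1 ≤ i) (hi : i ≤ s (t + 1)) : f (psum s t + i) ∈ W (t + 1) := by
  rw [hW]
  exact subset_span (Set.mem_insert_of_mem _ ⟨_, ⟨by omega, by rw [psum_succ]; omega⟩, rfl⟩)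

lemma s_succ_le_of_mul_e_one (hWint : DirectSum.IsInternal W)
    (hWmul : ∀ i j, ∀ x ∈ W i, ∀ y ∈ W j, mul x y ∈ W (i + j)) (he1 : e 1 ∈ W 1) {u : ℕ}
    (hW : ∀ i, 1 ≤ i → i ≤ s (u + 2) → f (psum s (u + 1) + i) ∈ W (u + 2))
    (hf : ∀ i, 1 ≤ i → i ≤ s (u + 2) → f (psum s (u + 1) + i) ≠ 0)
    (hrel : ∀ i, 1 ≤ i → i ≤ s (u + 2) →
      mul (f (psum s u + i)) (e 1) = f (psum s (u + 1) + i)) :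
    s (u + 2) ≤ s (u + 1) := by
  by_contra! h
  have hshift := hrel (s (u + 1) + 1) (by omega) h
  rw [← add_assoc, ← psum_succ] at hshift
  have hdeg := hWmul _ _ _ (hW 1 le_rfl (by omega)) _ he1
  rw [hshift] at hdeg
  exact hf _ (by omega) h (hWint.eq_zero_of_mem_of_mem (by omega) hdeg (hW _ (by omega) h))

lemma mul_e_one_of_normalized {m : ℕ}
    (hWmul : ∀ i j, ∀ x ∈ W i, ∀ y ∈ W j, mul x y ∈ W (i + j)) (he1 : e 1 ∈ W 1)
    (hWhigh : ∀ i, m < i → W i = ⊥) (hshigh : ∀ i, m < i → s i = 0)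
    (hWspan : ∀ i, 1 ≤ i → i ≤ m →
      W i = span ℂ (insert (e i) (f '' Set.Icc (psum s (i - 1) + 1) (psum s i))))
    (hnorm : ∀ t i, 1 ≤ t → t ≤ m - 1 →
      (1 ≤ i → i ≤ s (t + 1) → mul (f (psum s (t - 1) + i)) (e 1) = f (psum s t + i)) ∧
      (s (t + 1) + 1 ≤ i → i ≤ s t → mul (f (psum s (t - 1) + i)) (e 1) = 0)) :
    ∀ k, k < m →
      (∀ i, 1 ≤ i → i ≤ s (k + 2) → mul (f (psum s k + i)) (e 1) = f (psum s (k + 1) + i)) ∧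
      (∀ i, s (k + 2) + 1 ≤ i → i ≤ s (k + 1) → mul (f (psum s k + i)) (e 1) = 0) := by
  intro k hk
  rcases lt_or_eq_of_le (Nat.succ_le_of_lt hk) with hlt | htop
  · exact ⟨fun i hi1 hi => by simpa using (hnorm (k + 1) i (by omega) (by omega)).1 hi1 hi,
      fun i hi1 hi => by simpa using (hnorm (k + 1) i (by omega) (by omega)).2 hi1 hi⟩
  · refine ⟨fun i hi1 hi => by rw [hshigh _ (by omega)] at hi; omega, fun i hi1 hi => ?_⟩
    have hf := f_mem_of_eq_span (by simpa using hWspan (k + 1) (by omega) htop.le) (by omega) hi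
    simpa [hWhigh (k + 1 + 1) (by omega)] using hWmul _ _ _ hf _ he1

end Graded

theorem graded_p_filiform_f_e_products_general
    {Z : Type*} [AddCommGroup Z] [Module ℂ Z]
    (mul : Z →ₗ[ℂ] Z →ₗ[ℂ] Z) (hzin : IsZinbiel mul)
    (n p : ℕ)
    (e f : ℕ → Z)
    -- `{e_1, …, e_{n-p}, f_1, …, f_p}` is a basis of the `n`-dimensional algebra `Z`
    (hli : LinearIndependent ℂ (adaptedFam (n - p) p e f))
    -- the basis is adapted of first type: `e_1 ∘ e_i = e_{i+1}`, `e_1 ∘ e_{n-p} = 0`,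
    -- `e_1 ∘ f_j = 0`
    (hee : ∀ i, 1 ≤ i → i ≤ n - p - 1 → mul (e 1) (e i) = e (i + 1))
    -- the natural gradation `Z = Z_1 ⊕ ⋯ ⊕ Z_{n-p}` : `W i` is the `i`-th component,
    -- the gradation is multiplicative and generated in degree one
    -- (`Z_{i+1} = Z_1 ∘ Z_i`, coming from `Z_i = Z^i/Z^{i+1}`), and `e_i ∈ Z_i`
    (W : ℕ → Submodule ℂ Z)
    (hWhigh : ∀ i, n - p < i → W i = ⊥)
    (hWint : DirectSum.IsInternal W)
    (hWmul : ∀ i j, ∀ x ∈ W i, ∀ y ∈ W j, mul x y ∈ W (i + j))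
    (heW : ∀ i, 1 ≤ i → i ≤ n - p → e i ∈ W i)
    -- `s_i = dim Z_i - 1` and
    -- `Z_i = ⟨e_i, f_{s_1+⋯+s_{i-1}+1}, …, f_{s_1+⋯+s_i}⟩` for `1 ≤ i ≤ n-p`
    (s : ℕ → ℕ) (hshigh : ∀ i, n - p < i → s i = 0)
    (hsum : psum s (n - p) = p)
    (hWspan : ∀ i, 1 ≤ i → i ≤ n - p →
      W i = Submodule.span ℂ (insert (e i) (f '' Set.Icc (psum s (i - 1) + 1) (psum s i))))
    -- the basis is normalized so that `f_{s_1+⋯+s_{t-1}+i} ∘ e_1 = f_{s_1+⋯+s_t+i}`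
    -- for `1 ≤ i ≤ s_{t+1}` and `= 0` for `s_{t+1}+1 ≤ i ≤ s_t`
    (hnorm : ∀ t i, 1 ≤ t → t ≤ n - p - 1 →
      (1 ≤ i → i ≤ s (t + 1) → mul (f (psum s (t - 1) + i)) (e 1) = f (psum s t + i)) ∧
      (s (t + 1) + 1 ≤ i → i ≤ s t → mul (f (psum s (t - 1) + i)) (e 1) = 0))
    :
    ∀ k j, 1 ≤ j → j ≤ n - p - k →
      (∀ i, 1 ≤ i → i ≤ s (k + j + 1) →
        mul (f (psum s k + i)) (e j) = ((j.factorial : ℂ))⁻¹ • f (psum s (k + j) + i)) ∧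
      (∀ i, s (k + j + 1) + 1 ≤ i → i ≤ s (k + j) →
        mul (f (psum s k + i)) (e j) = 0) := by
  intro k j hj hjk
  have he1 : e 1 ∈ W 1 := heW 1 le_rfl (by omega)
  have hrel := mul_e_one_of_normalized hWmul he1 hWhigh hshigh hWspan hnorm
  have hanti : AntitoneOn s (Set.Ici 1) := by
    refine antitoneOn_nat_Ici_of_succ_le fun t ht => ?_
    obtain ⟨u, rfl⟩ := Nat.exists_eq_add_of_le' ht
    rcases lt_or_ge (u + 1) (n - p) with hu | hu
    · have hW := hWspan (u + 2) (by omega) hu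
      have hp : psum s (u + 1) + s (u + 2) ≤ p :=
        (psum_succ s (u + 1)).symm.le.trans ((psum_mono s hu).trans_eq hsum)
      exact s_succ_le_of_mul_e_one hWint hWmul he1
        (fun i hi1 hi => f_mem_of_eq_span (by simpa using hW) hi1 hi)
        (fun i hi1 hi => adaptedFam_right_ne_zero hli (by omega) (by omega)) (hrel u (by omega)).1
    · simp [hshigh (u + 1 + 1) (by omega)]
  exact hzin.mul_chain_of_mul_e_one (fun i hi1 hi => hee i hi1 (by omega)) hanti hrel j k hj
    (by omega)

/-- Proposition (`fej`): in the normalized adapted basis, for all `k ≥ 0` and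
`1 ≤ j ≤ n-p-k`: `f_{s_1+⋯+s_k+i} ∘ e_j = (1/j!) f_{s_1+⋯+s_{k+j}+i}` for
`1 ≤ i ≤ s_{k+j+1}`, and `f_{s_1+⋯+s_k+i} ∘ e_j = 0` for `s_{k+j+1}+1 ≤ i ≤ s_{k+j}`. -/
theorem graded_p_filiform_f_e_products
    {Z : Type*} [AddCommGroup Z] [Module ℂ Z]
    (mul : Z →ₗ[ℂ] Z →ₗ[ℂ] Z) (hzin : IsZinbiel mul)
    (n p : ℕ) (hpn : p < n)
    (e f : ℕ → Z)
    -- `{e_1, …, e_{n-p}, f_1, …, f_p}` is a basis of the `n`-dimensional algebra `Z`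
    (hli : LinearIndependent ℂ (adaptedFam (n - p) p e f))
    (hsp : Submodule.span ℂ (Set.range (adaptedFam (n - p) p e f)) = ⊤)
    -- the basis is adapted of first type: `e_1 ∘ e_i = e_{i+1}`, `e_1 ∘ e_{n-p} = 0`,
    -- `e_1 ∘ f_j = 0`
    (hee : ∀ i, 1 ≤ i → i ≤ n - p - 1 → mul (e 1) (e i) = e (i + 1))
    (hetop : mul (e 1) (e (n - p)) = 0)
    (hef : ∀ j, 1 ≤ j → j ≤ p → mul (e 1) (f j) = 0)
    -- the natural gradation `Z = Z_1 ⊕ ⋯ ⊕ Z_{n-p}` : `W i` is the `i`-th component,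
    -- the gradation is multiplicative and generated in degree one
    -- (`Z_{i+1} = Z_1 ∘ Z_i`, coming from `Z_i = Z^i/Z^{i+1}`), and `e_i ∈ Z_i`
    (W : ℕ → Submodule ℂ Z)
    (hW0 : W 0 = ⊥)
    (hWhigh : ∀ i, n - p < i → W i = ⊥)
    (hWint : DirectSum.IsInternal W)
    (hWmul : ∀ i j, ∀ x ∈ W i, ∀ y ∈ W j, mul x y ∈ W (i + j))
    (hWgen : ∀ i, 1 ≤ i → W (i + 1) = Submodule.span ℂ {z | ∃ x ∈ W 1, ∃ y ∈ W i, z = mul x y})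
    (heW : ∀ i, 1 ≤ i → i ≤ n - p → e i ∈ W i)
    -- `Z` is `p`-filiform with characteristic vector `e_1 ∉ Z²`
    (hfil : CharSeqMax mul n p)
    (he1sq : e 1 ∉ algSq mul)
    -- `s_i = dim Z_i - 1` and
    -- `Z_i = ⟨e_i, f_{s_1+⋯+s_{i-1}+1}, …, f_{s_1+⋯+s_i}⟩` for `1 ≤ i ≤ n-p`
    (s : ℕ → ℕ) (hs0 : s 0 = 0) (hshigh : ∀ i, n - p < i → s i = 0)
    (hsum : psum s (n - p) = p)
    (hWspan : ∀ i, 1 ≤ i → i ≤ n - p →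
      W i = Submodule.span ℂ (insert (e i) (f '' Set.Icc (psum s (i - 1) + 1) (psum s i))))
    -- the basis is normalized so that `f_{s_1+⋯+s_{t-1}+i} ∘ e_1 = f_{s_1+⋯+s_t+i}`
    -- for `1 ≤ i ≤ s_{t+1}` and `= 0` for `s_{t+1}+1 ≤ i ≤ s_t`
    (hnorm : ∀ t i, 1 ≤ t → t ≤ n - p - 1 →
      (1 ≤ i → i ≤ s (t + 1) → mul (f (psum s (t - 1) + i)) (e 1) = f (psum s t + i)) ∧
      (s (t + 1) + 1 ≤ i → i ≤ s t → mul (f (psum s (t - 1) + i)) (e 1) = 0))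
    :
    ∀ k j, 1 ≤ j → j ≤ n - p - k →
      (∀ i, 1 ≤ i → i ≤ s (k + j + 1) →
        mul (f (psum s k + i)) (e j) = ((j.factorial : ℂ))⁻¹ • f (psum s (k + j) + i)) ∧
      (∀ i, s (k + j + 1) + 1 ≤ i → i ≤ s (k + j) →
        mul (f (psum s k + i)) (e j) = 0) :=
  graded_p_filiform_f_e_products_general mul hzin n p e f hli hee W hWhigh hWint hWmul heW s hshigh
    hsum hWspan hnorm
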